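/- Let G be a finite subset of ℕ² containing (0,0). Then for every k > 0, G^∞ = (G^k)^∞, i.e., the discrete self-similar fractal generated by G equals the one generated by its k-th iterate G^k. -/

import Mathlib

attribute [local instance] Classical.propDecidable

namespace SelfAssembly

/-! ### Positions and directions -/

/-- Positions of the discrete plane. -/
abbrev Pos : Type := ℤ × ℤ

/-- The four cardinal directions. -/
inductive Dir : Type
  | N | E | S | W
deriving DecidableEq

/-- The unit vector associated with a direction. -/
def Dir.vec : Dir → Pos
  | .N => (0, 1)
  | .E => (1, 0)
  | .S => (0, -1)
  | .W => (-1, 0)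

/-- The opposite direction. -/
def Dir.opp : Dir → Dir
  | .N => .S
  | .E => .W
  | .S => .N
  | .W => .E

/-- The list of all directions (canonical order). -/
def Dir.all : List Dir := [.N, .E, .S, .W]

/-- Two positions adjacent in the grid graph of ℤ². -/
def gridAdj (z z' : Pos) : Prop := ∃ d : Dir, z' = z + d.vec

lemma gridAdj_symm {z z' : Pos} (h : gridAdj z z') : gridAdj z' z := by
  obtain ⟨d, rfl⟩ := h
  refine ⟨d.opp, ?_⟩
  cases d <;>
    simp [Dir.vec, Dir.opp, Prod.ext_iff, Prod.fst_add, Prod.snd_add]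

lemma gridAdj_irrefl (z : Pos) : ¬ gridAdj z z := by
  rintro ⟨d, h⟩
  cases d <;>
    simp [Dir.vec, Prod.ext_iff, Prod.fst_add, Prod.snd_add] at h

noncomputable section

/-! ### Shapes and substitutions on ℕ² -/

/-- Positions with natural coordinates. -/
abbrev NPos : Type := ℕ × ℕ

/-- The embedding of ℕ² into ℤ². -/
def embedN (p : NPos) : Pos := ((p.1 : ℤ), (p.2 : ℤ))

/-- The bounding-box width of a shape: `1 +` the maximal x-coordinate. -/
def wdt (G : Set NPos) : ℕ := sSup (Prod.fst '' G) + 1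

/-- The bounding-box height of a shape: `1 +` the maximal y-coordinate. -/
def hgt (G : Set NPos) : ℕ := sSup (Prod.snd '' G) + 1

/-- The substitution associated with a generator `G`:
`σ_G(X) = { p | ⌊p / G⌋ ∈ X ∧ p mod G ∈ G }`. -/
def subst (G : Set NPos) (X : Set NPos) : Set NPos :=
  {p | (p.1 / wdt G, p.2 / hgt G) ∈ X ∧ (p.1 % wdt G, p.2 % hgt G) ∈ G}

/-- The `k`-th iterate `G^k = σ_G^k({(0,0)})`. -/
def iterG (G : Set NPos) (k : ℕ) : Set NPos := (subst G)^[k] {(0, 0)}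

/-- The discrete self-similar fractal shape `G^∞ = ⋃ₖ G^k`. -/
def limitG (G : Set NPos) : Set NPos := ⋃ k, iterG G k

/-- A shape is connected if any two of its cells are linked by a path of
grid-adjacent cells of the shape. -/
def ShapeConnected (G : Set NPos) : Prop :=
  ∀ p ∈ G, ∀ q ∈ G,
    Relation.ReflTransGen (fun a b => a ∈ G ∧ b ∈ G ∧ gridAdj (embedN a) (embedN b)) p q

/-- The generator `K = {0,…,5}² \ {2,3}²` of the Sierpinski Cacarpet. -/
def Kgen : Set NPos :=
  {p | p.1 < 6 ∧ p.2 < 6 ∧ ¬((p.1 = 2 ∨ p.1 = 3) ∧ (p.2 = 2 ∨ p.2 = 3))}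

/-- The 2×2 square `H = {0,1}²`. -/
def Hsq : Set NPos := {p | p.1 < 2 ∧ p.2 < 2}

/-! ### Grids, grid neighborhood graphs, ports, bandwidth -/

/-- The grid `G^#`: all positions of ℤ² which are congruent, modulo the
bounding box of `G`, to a cell of `G`. -/
def gridOf (G : Set NPos) : Set Pos :=
  {z | ((z.1 % (wdt G : ℤ)).toNat, (z.2 % (hgt G : ℤ)).toNat) ∈ G}

/-- The vertex set of the grid neighborhood graph `G⁺`:
`G` together with the grid cells at distance 1 of `G`. -/
def gplusV (G : Set NPos) : Set Pos :=
  embedN '' G ∪ {z | z ∈ gridOf G ∧ ∃ d : Dir, z + d.vec ∈ embedN '' G}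

/-- The grid neighborhood graph `G⁺`: the subgraph of the grid graph of ℤ²
induced by `gplusV G`. -/
def gplus (G : Set NPos) : SimpleGraph Pos where
  Adj z z' := z ∈ gplusV G ∧ z' ∈ gplusV G ∧ gridAdj z z'
  symm := ⟨fun _ _ h => ⟨h.2.1, h.1, gridAdj_symm h.2.2⟩⟩
  loopless := ⟨fun z h => gridAdj_irrefl z h.2.2⟩

/-- The `d`-port of `G`: `G^{+d} = {p ∈ G^# : p − d ∈ G}`. -/
def port (G : Set NPos) (d : Dir) : Set Pos :=
  {z | z ∈ gridOf G ∧ z - d.vec ∈ embedN '' G}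

/-- There exist `n` pairwise vertex-disjoint paths in `Gr` from `Src` to `Tgt`. -/
def DisjointConnections (Gr : SimpleGraph Pos) (Src Tgt : Set Pos) (n : ℕ) : Prop :=
  ∃ (u v : Fin n → Pos) (w : ∀ i, Gr.Walk (u i) (v i)),
    (∀ i, u i ∈ Src) ∧ (∀ i, v i ∈ Tgt) ∧ (∀ i, (w i).IsPath) ∧
    ∀ i j, i ≠ j → ∀ z, z ∈ (w i).support → z ∉ (w j).support

/-- The `(d,d')`-bandwidth of `G`: the maximal number of pairwise
vertex-disjoint paths from the `d`-port to the `d'`-port in `G⁺`. -/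
def bandwidth (G : Set NPos) (d d' : Dir) : ℕ :=
  sSup {n | DisjointConnections (gplus G) (port G d) (port G d') n}

/-! ### Subconnectors -/

/-- A witness that `G⁺` (with its ports marked) contains a pointed subgraph
which is a pointed subdivision of `H⁺` (with its ports marked): an injective
map `φ` of the vertices of `H⁺` sending `d`-ports to `d`-ports, together with,
for each edge of `H⁺`, a path of `G⁺` between the images of its endpoints,
these paths being internally disjoint from each other and from the images of
the vertices of `H⁺`. -/
structure SubdivEmbed (H G : Set NPos) where
  φ : Pos → Pos
  inj : Set.InjOn φ (gplusV H)
  marks : ∀ d : Dir, ∀ v ∈ port H d, φ v ∈ port G d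
  walk : ∀ u v : Pos, (gplus H).Adj u v → (gplus G).Walk (φ u) (φ v)
  walk_path : ∀ u v h, (walk u v h).IsPath
  walk_avoid : ∀ u v h, ∀ z ∈ (walk u v h).support,
      ∀ w ∈ gplusV H, z = φ w → (w = u ∨ w = v)
  walk_disj : ∀ u v h u' v' h', ¬((u = u' ∧ v = v') ∨ (u = v' ∧ v = u')) →
      ∀ z, z ∈ (walk u v h).support → z ∈ (walk u' v' h').support →
        ((z = φ u ∨ z = φ v) ∧ (z = φ u' ∨ z = φ v'))

/-- `H` is a subconnector of `G`, written `H ⪯ G`. -/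
def Subconnector (H G : Set NPos) : Prop := Nonempty (SubdivEmbed H G)

/-- Integer division of a position by the bounding box of a shape. -/
def quotP (P : Set NPos) (z : Pos) : Pos := (z.1.fdiv (wdt P), z.2.fdiv (hgt P))

/-- Remainder of a position modulo the bounding box of a shape. -/
def modP (P : Set NPos) (z : Pos) : Pos := (z.1.fmod (wdt P), z.2.fmod (hgt P))

/-- `v` is a `D`-disconnector of `P⁺`: for every pair `(d,d') ∈ D`, removing
`v` from `P⁺` disconnects the `d`-port from the `d'`-port. -/
def Disconnector (P : Set NPos) (D : Set (Dir × Dir)) (v : Pos) : Prop :=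
  ∀ dd ∈ D, ¬ ∃ (a b : Pos) (w : (gplus P).Walk a b),
      a ∈ port P dd.1 ∧ b ∈ port P dd.2 ∧ v ∉ w.support

/-- `Cause(v, D)`: the pairs of directions `(δ, δ')` such that some path of
`P⁺` from a `d`-port to a `d'`-port with `(d,d') ∈ D` enters `v` from
direction `δ` and leaves it through direction `δ'`. -/
def Cause (P : Set NPos) (D : Set (Dir × Dir)) (v : Pos) : Set (Dir × Dir) :=
  {p | ∃ dd ∈ D, ∃ (a b : Pos) (w : (gplus P).Walk a b),
      a ∈ port P dd.1 ∧ b ∈ port P dd.2 ∧ w.IsPath ∧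
      ∃ i : ℕ, w.support[i]? = some (v - p.1.vec) ∧
        w.support[i + 1]? = some v ∧
        w.support[i + 2]? = some (v + p.2.vec)}

/-! ### The abstract Tile Assembly Model -/

/-- A Wang tile: a glue on each side. -/
abbrev Tile (Glue : Type) := Dir → Glue

/-- An assembly: a partial function from positions to tiles. -/
abbrev Assembly (Glue : Type) := Pos → Option (Tile Glue)

/-- The domain of an assembly. -/
def adom {Glue : Type} (A : Assembly Glue) : Set Pos := {z | A z ≠ none}

/-- A seeded tile assembly system. -/
structure TAS (Glue : Type) where
  tileset : Finset (Tile Glue)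
  strength : Glue → ℤ
  temp : ℕ
  seed : Assembly Glue
  seed_tiles : ∀ z t, seed z = some t → t ∈ tileset

/-- The binding of the edge out of `z` in direction `d` in the assembly `A`:
the strength of the common glue if the two facing glues match, `0` otherwise. -/
def binding {Glue : Type} (S : TAS Glue) (A : Assembly Glue) (z : Pos) (d : Dir) : ℤ :=
  match A z, A (z + d.vec) with
  | some t, some t' => if t d = t' d.opp then S.strength (t d) else 0
  | _, _ => 0

/-- An assembly is stable if every cut of its domain is crossed by edges of
total binding at least the temperature. -/
def Stable {Glue : Type} (S : TAS Glue) (A : Assembly Glue) : Prop :=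
  ∀ P : Set Pos, P ⊆ adom A → P.Nonempty → (adom A \ P).Nonempty →
    ∃ F : Finset (Pos × Dir),
      (∀ e ∈ F, e.1 ∈ P ∧ e.1 + e.2.vec ∈ adom A \ P) ∧
      (S.temp : ℤ) ≤ ∑ e ∈ F, binding S A e.1 e.2

/-- `Attach S A B`: `B` is obtained from `A` by attaching one tile of the
tileset at an empty position, the result being stable. -/
def Attach {Glue : Type} (S : TAS Glue) (A B : Assembly Glue) : Prop :=
  ∃ t ∈ S.tileset, ∃ z : Pos, A z = none ∧ B = Function.update A z (some t) ∧ Stable S B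

/-- A production of `S`: an assembly which is the limit of a (finite or
infinite) sequence of attachments starting from the seed. -/
def IsProduction {Glue : Type} (S : TAS Glue) (A : Assembly Glue) : Prop :=
  ∃ α : ℕ → Assembly Glue, α 0 = S.seed ∧
    (∀ n, α (n + 1) = α n ∨ Attach S (α n) (α (n + 1))) ∧
    ∀ z t, A z = some t ↔ ∃ n, (α n) z = some t

/-- A terminal production: a production to which no tile can be attached. -/
def Terminal {Glue : Type} (S : TAS Glue) (A : Assembly Glue) : Prop :=
  IsProduction S A ∧ ∀ B, ¬ Attach S A B

/-- `S` strictly self-assembles `X`: every terminal production has domain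
exactly `X`. -/
def StrictlyAssembles {Glue : Type} (S : TAS Glue) (X : Set Pos) : Prop :=
  ∀ A, Terminal S A → adom A = X

/-- `S` weakly self-assembles `X`: there is a subset `Y` of the tileset such
that in every terminal production, the positions carrying a tile of `Y` are
exactly those of `X`. -/
def WeaklyAssembles {Glue : Type} (S : TAS Glue) (X : Set Pos) : Prop :=
  ∃ Y : Finset (Tile Glue), Y ⊆ S.tileset ∧
    ∀ A, Terminal S A → ∀ z : Pos, (∃ t ∈ Y, A z = some t) ↔ z ∈ X

/-! ### Sets of assemblies for the Tree Pump Lemma -/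

/-- The fill-in of `D`: `D` together with the positions from which every
(self-avoiding) path avoiding `D` is finite. -/
def fillIn (D : Set Pos) : Set Pos :=
  D ∪ {p | ¬ ∃ f : ℕ → Pos, f 0 = p ∧ Function.Injective f ∧
        ∀ n, f n ∉ D ∧ gridAdj (f n) (f (n + 1))}

/-- The assembly `A` encircles an `m × m` square: the fill-in of its domain
contains a full `m × m` square of positions. -/
def Encircles {Glue : Type} (A : Assembly Glue) (m : ℕ) : Prop :=
  ∃ z : Pos, ∀ i j : ℕ, i < m → j < m → z + ((i : ℤ), (j : ℤ)) ∈ fillIn (adom A)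

/-- Inner product of a position with a real vector. -/
def dot (p : Pos) (dv : ℝ × ℝ) : ℝ := (p.1 : ℝ) * dv.1 + (p.2 : ℝ) * dv.2

/-- The assembly covers no position `p` with `p·d > k + |seed|`. -/
def BBounded {Glue : Type} (S : TAS Glue) (k : ℝ) (dv : ℝ × ℝ) (A : Assembly Glue) : Prop :=
  ∀ p ∈ adom A, dot p dv ≤ k + (adom S.seed).ncard

/-- The assembly contains a nonempty subassembly periodic with a period `p`
with `|p·d| > 0`. -/
def PPeriodic {Glue : Type} (dv : ℝ × ℝ) (A : Assembly Glue) : Prop :=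
  ∃ pv : Pos, dot pv dv ≠ 0 ∧
    ∃ E : Set Pos, E.Nonempty ∧ E ⊆ adom A ∧ ∀ z ∈ E, z + pv ∈ E ∧ A (z + pv) = A z

/-! ### Embedded circuits -/

/-- A wiring on a unit cell: an ordered list of input sides, a set of output
sides (the remaining sides being inert), and for each output side its
output-wire datum (the ordered input sides of the next cell, with the
distinguished opposite direction) and the index of the corresponding output of
the gate. -/
structure Wiring where
  inputs : List Dir
  inputs_nodup : inputs.Nodup
  outputs : Finset Dir
  disjoint : ∀ d ∈ inputs, d ∉ outputs
  outWire : Dir → List Dir × Dir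
  outWire_distinguished : ∀ d ∈ outputs,
    (outWire d).2 = d.opp ∧ d.opp ∈ (outWire d).1 ∧ (outWire d).1.Nodup
  outIdx : Dir → ℕ
  outIdx_lt : ∀ d ∈ outputs, outIdx d < outputs.card
  outIdx_inj : ∀ d ∈ outputs, ∀ d' ∈ outputs, outIdx d = outIdx d' → d = d'

/-- A gate: a wiring together with a function (a function `Σ^i → Σ^o`,
represented as a function on lists; see the field `fn_arity` of `Circuit`). -/
structure Gate (A : Type) where
  wiring : Wiring
  fn : List A → List A

/-- A circuit on the alphabet `A`: gates placed on the vertex set `dom` of an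
oriented subgraph of ℤ² with arc set `arcs`, with input and output buses of
boundary arcs, such that wirings of neighbouring gates match. -/
structure Circuit (A : Type) where
  dom : Set Pos
  arcs : Set (Pos × Dir)
  inputBus : Set (Pos × Dir)
  outputBus : Set (Pos × Dir)
  gate : Pos → Gate A
  arcs_src : ∀ a ∈ arcs, a.1 ∈ dom
  arcs_tgt : ∀ a ∈ arcs, a.1 + a.2.vec ∈ dom
  arcs_once : ∀ a ∈ arcs, (a.1 + a.2.vec, a.2.opp) ∉ arcs
  inputBus_mem : ∀ a ∈ inputBus, a.1 ∉ dom ∧ a.1 + a.2.vec ∈ dom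
  outputBus_mem : ∀ a ∈ outputBus, a.1 ∈ dom ∧ a.1 + a.2.vec ∉ dom
  arc_wiring : ∀ a ∈ arcs,
      a.2 ∈ (gate a.1).wiring.outputs ∧
      a.2.opp ∈ (gate (a.1 + a.2.vec)).wiring.inputs ∧
      (gate a.1).wiring.outWire a.2 = ((gate (a.1 + a.2.vec)).wiring.inputs, a.2.opp)
  nonarc_inert : ∀ z ∈ dom, ∀ d : Dir, z + d.vec ∈ dom →
      (z, d) ∉ arcs → (z + d.vec, d.opp) ∉ arcs →
      d ∉ (gate z).wiring.inputs ∧ d ∉ (gate z).wiring.outputs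
  boundary : ∀ z ∈ dom, ∀ d : Dir, z + d.vec ∉ dom →
      ((d ∉ (gate z).wiring.inputs ∧ d ∉ (gate z).wiring.outputs ∧
          (z, d) ∉ outputBus ∧ (z + d.vec, d.opp) ∉ inputBus) ∨
       (d ∈ (gate z).wiring.outputs ∧ (z, d) ∈ outputBus) ∨
       (d ∈ (gate z).wiring.inputs ∧ (z + d.vec, d.opp) ∈ inputBus))
  fn_arity : ∀ z ∈ dom, ∀ xs : List A, xs.length = (gate z).wiring.inputs.length →
      ((gate z).fn xs).length = (gate z).wiring.outputs.card

/-- The list of values carried by the incoming arcs of the cell `z`, in the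
order of the input sides of its gate. -/
def inputVals {A : Type} (C : Circuit A) (v : Pos × Dir → A) (z : Pos) : List A :=
  (C.gate z).wiring.inputs.map fun e => v (z + e.vec, e.opp)

/-- An arc valuation conforms to the circuit `C` if, at each gate, the values
on the output arcs are the components of the gate's function applied to the
values on its input arcs. -/
def Conforms {A : Type} (C : Circuit A) (v : Pos × Dir → A) : Prop :=
  ∀ z ∈ C.dom, ∀ d ∈ (C.gate z).wiring.outputs,
    ((C.gate z).fn (inputVals C v z))[(C.gate z).wiring.outIdx d]? = some (v (z, d))

/-- A circuit is closed when its input bus is empty. -/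
def Circuit.Closed {A : Type} (C : Circuit A) : Prop := C.inputBus = ∅

/-- Well-foundedness of the dependency graph: no directed cycle and no
infinite backwards path. -/
def Circuit.WellFoundedDep {A : Type} (C : Circuit A) : Prop :=
  WellFounded fun b a : Pos => ∃ d : Dir, (b, d) ∈ C.arcs ∧ b + d.vec = a

/-- An evaluable circuit: well-founded and finitely rooted. -/
def Circuit.Evaluable {A : Type} (C : Circuit A) : Prop :=
  C.WellFoundedDep ∧ C.inputBus.Finite ∧
    {z | z ∈ C.dom ∧ (C.gate z).wiring.inputs = []}.Finite

/-- A circuit is self-describing if some decoding function recovers the gate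
at each position from the list of pairs (value, direction) of its incoming
arcs in the conforming valuation. -/
def Circuit.SelfDescribing {A : Type} (C : Circuit A) : Prop :=
  ∃ dec : List (A × Dir) → Gate A,
    ∀ v : Pos × Dir → A, Conforms C v → ∀ z ∈ C.dom,
      dec ((C.gate z).wiring.inputs.map fun e => (v (z + e.vec, e.opp), e.opp)) = C.gate z

/-! ### Oriented graphs on ℤ² and locally deterministic arc colorings -/

/-- An oriented subgraph of ℤ², with arcs between adjacent cells and at most
one arc per edge. An arc is a pair `(z, d)`: the arc out of `z` in
direction `d`. -/
structure ArcGraph where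
  verts : Set Pos
  arcs : Set (Pos × Dir)
  arcs_src : ∀ a ∈ arcs, a.1 ∈ verts
  arcs_tgt : ∀ a ∈ arcs, a.1 + a.2.vec ∈ verts
  arcs_once : ∀ a ∈ arcs, (a.1 + a.2.vec, a.2.opp) ∉ arcs

/-- The directions of the incoming arcs of `v` (canonical order). -/
def inDirsOf (Ar : Set (Pos × Dir)) (v : Pos) : List Dir :=
  Dir.all.filter fun e => (v - e.vec, e) ∈ Ar

/-- The input vector of a vertex: the list of pairs (direction, color) of its
incoming arcs. -/
def inputVectorOf {C : Type} (Ar : Set (Pos × Dir)) (P : Pos × Dir → C) (v : Pos) :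
    List (Dir × C) :=
  (inDirsOf Ar v).map fun e => (e, P (v - e.vec, e))

/-- A coloring `P` of the arcs `Ar` is locally deterministic if there are two
prediction functions `πin`, `πsym` such that for every arc `e : a → b` in
direction `d`, `P e = πsym (input vector of a, d)` and `πin (d, P e)` is the
set of directions of the incoming arcs of `b`. -/
def LocallyDeterministic {C : Type} (Ar : Set (Pos × Dir)) (P : Pos × Dir → C) : Prop :=
  ∃ (πin : Dir × C → Set Dir) (πsym : List (Dir × C) × Dir → C),
    ∀ a ∈ Ar,
      P a = πsym (inputVectorOf Ar P a.1, a.2) ∧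
      πin (a.2, P a) = {e : Dir | (a.1 + a.2.vec - e.vec, e) ∈ Ar}

/-- The vertex type of `v`: the partial function assigning to each direction
`d` in which `v` has an arc the pair (direction of that arc, its color). -/
def vertexType {C : Type} (Ar : Set (Pos × Dir)) (P : Pos × Dir → C) (v : Pos) :
    Dir → Option (Dir × C) := fun d =>
  if (v, d) ∈ Ar then some (d, P (v, d))
  else if (v + d.vec, d.opp) ∈ Ar then some (d.opp, P (v + d.vec, d.opp))
  else none

/-- The atlas of a coloring: the set of vertex types of its vertices. -/
def atlas {C : Type} (Gr : ArcGraph) (P : Pos × Dir → C) : Set (Dir → Option (Dir × C)) :=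
  (vertexType Gr.arcs P) '' Gr.verts

/-- Well-foundedness (acyclicity + no infinite backwards path) of an oriented
graph on ℤ². -/
def ArcGraph.WellFoundedArcs (Gr : ArcGraph) : Prop :=
  WellFounded fun b a : Pos => ∃ d : Dir, (b, d) ∈ Gr.arcs ∧ b + d.vec = a

/-- The vertices of in-degree 0 of an oriented graph on ℤ². -/
def ArcGraph.roots (Gr : ArcGraph) : Set Pos :=
  {v | v ∈ Gr.verts ∧ ∀ e : Dir, (v - e.vec, e) ∉ Gr.arcs}

end

/-! With `W × H` the bounding box of `G`, the iterate `σ_G^k` reads positions in base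
`(W^k, H^k)`: `p ∈ σ_G^k X` iff `⌊p / (W^k, H^k)⌋ ∈ X` and `p mod (W^k, H^k) ∈ G^k`.
Since `(0,0) ∈ G` and `G` is finite, `G^k` has bounding box exactly `W^k × H^k`, so this
says `σ_{G^k} = σ_G^k` and hence `(G^k)^j = G^{kj}`. The `G^n` increase with `n`, so their
union equals the union over the multiples of `k`. -/

section Substitution

variable {G : Set NPos}

lemma wdt_pos (G : Set NPos) : 0 < wdt G := Nat.succ_pos _

lemma hgt_pos (G : Set NPos) : 0 < hgt G := Nat.succ_pos _

lemma fst_lt_wdt (hfin : G.Finite) {p : NPos} (hp : p ∈ G) : p.1 < wdt G :=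
  Nat.lt_succ_of_le (le_csSup (hfin.image _).bddAbove ⟨p, hp, rfl⟩)

lemma snd_lt_hgt (hfin : G.Finite) {p : NPos} (hp : p ∈ G) : p.2 < hgt G :=
  Nat.lt_succ_of_le (le_csSup (hfin.image _).bddAbove ⟨p, hp, rfl⟩)

lemma exists_mem_fst_eq_wdt_sub_one (hfin : G.Finite) (hne : G.Nonempty) :
    ∃ p ∈ G, p.1 = wdt G - 1 := by
  obtain ⟨p, hp, hp1⟩ := Nat.sSup_mem (hne.image Prod.fst) (hfin.image _).bddAbove
  exact ⟨p, hp, by rw [wdt, hp1, Nat.add_sub_cancel]⟩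

lemma subst_mono (G : Set NPos) : Monotone (subst G) :=
  fun _ _ hXY _ hp => ⟨hXY hp.1, hp.2⟩

lemma mk_mem_subst (hfin : G.Finite) {X : Set NPos} {q r : NPos} (hq : q ∈ X) (hr : r ∈ G) :
    (r.1 + wdt G * q.1, r.2 + hgt G * q.2) ∈ subst G X := by
  have h1 := fst_lt_wdt hfin hr
  have h2 := snd_lt_hgt hfin hr
  refine ⟨?_, ?_⟩
  · simpa only [Nat.add_mul_div_left _ _ (wdt_pos G), Nat.add_mul_div_left _ _ (hgt_pos G),
      Nat.div_eq_of_lt h1, Nat.div_eq_of_lt h2, Nat.zero_add] using hq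
  · simpa only [Nat.add_mul_mod_self_left, Nat.mod_eq_of_lt h1, Nat.mod_eq_of_lt h2] using hr

lemma iterG_succ (G : Set NPos) (k : ℕ) : iterG G (k + 1) = subst G (iterG G k) :=
  Function.iterate_succ_apply' _ _ _

lemma iterate_subst (G : Set NPos) (k : ℕ) (X : Set NPos) :
    (subst G)^[k] X = {p | (p.1 / wdt G ^ k, p.2 / hgt G ^ k) ∈ X ∧
        (p.1 % wdt G ^ k, p.2 % hgt G ^ k) ∈ iterG G k} := by
  induction k generalizing X with
  | zero => ext p; simp [iterG, Nat.mod_one]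
  | succ k ih =>
    ext p
    rw [Function.iterate_succ_apply', ih, iterG_succ]
    simp only [subst, Set.mem_ofPred_eq, pow_succ', Nat.div_div_eq_div_mul,
      Nat.mod_mul_right_div_self, Nat.mod_mul_right_mod, and_assoc]

lemma isGreatest_fst_iterG (hfin : G.Finite) (h0 : (0, 0) ∈ G) (k : ℕ) :
    IsGreatest (Prod.fst '' iterG G k) (wdt G ^ k - 1) := by
  refine ⟨?_, ?_⟩
  · induction k with
    | zero => exact ⟨(0, 0), rfl, rfl⟩
    | succ k ih =>
      obtain ⟨q, hq, hq1⟩ := ih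
      obtain ⟨r, hr, hr1⟩ := exists_mem_fst_eq_wdt_sub_one hfin ⟨_, h0⟩
      refine ⟨_, iterG_succ G k ▸ mk_mem_subst hfin hq hr, ?_⟩
      have hw : wdt G ≤ wdt G * wdt G ^ k := Nat.le_mul_of_pos_right _ (pow_pos (wdt_pos G) k)
      show r.1 + wdt G * q.1 = _
      rw [hr1, hq1, pow_succ', Nat.mul_sub_one]
      have := wdt_pos G
      omega
  · rintro _ ⟨p, hp, rfl⟩
    rw [iterG, iterate_subst] at hp
    have := (Nat.div_eq_zero_iff_lt (pow_pos (wdt_pos G) k)).1 (Prod.mk.inj hp.1).1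
    omega

lemma wdt_iterG (hfin : G.Finite) (h0 : (0, 0) ∈ G) (k : ℕ) :
    wdt (iterG G k) = wdt G ^ k := by
  rw [wdt, (isGreatest_fst_iterG hfin h0 k).csSup_eq,
    Nat.sub_add_cancel (pow_pos (wdt_pos G) _)]

lemma wdt_image_swap (G : Set NPos) : wdt (Prod.swap '' G) = hgt G := by
  simp only [wdt, hgt, Set.image_image, Prod.fst_swap]

lemma hgt_image_swap (G : Set NPos) : hgt (Prod.swap '' G) = wdt G := by
  simp only [wdt, hgt, Set.image_image, Prod.snd_swap]

lemma subst_image_swap (G X : Set NPos) :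
    subst (Prod.swap '' G) (Prod.swap '' X) = Prod.swap '' subst G X := by
  simp only [subst, wdt_image_swap, hgt_image_swap]
  ext p
  simp [Set.image_swap_eq_preimage_swap]

lemma iterG_image_swap (G : Set NPos) (k : ℕ) :
    iterG (Prod.swap '' G) k = Prod.swap '' iterG G k := by
  induction k with
  | zero => simp [iterG]
  | succ k ih => rw [iterG_succ, iterG_succ, ih, subst_image_swap]

lemma hgt_iterG (hfin : G.Finite) (h0 : (0, 0) ∈ G) (k : ℕ) :
    hgt (iterG G k) = hgt G ^ k := by
  simpa only [wdt_image_swap, iterG_image_swap] using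
    wdt_iterG (hfin.image Prod.swap) ⟨(0, 0), h0, rfl⟩ k

lemma subst_iterG (hfin : G.Finite) (h0 : (0, 0) ∈ G) (k : ℕ) :
    subst (iterG G k) = (subst G)^[k] := by
  funext X
  rw [iterate_subst, subst, wdt_iterG hfin h0, hgt_iterG hfin h0]

lemma iterG_iterG (hfin : G.Finite) (h0 : (0, 0) ∈ G) (k j : ℕ) :
    iterG (iterG G k) j = iterG G (k * j) := by
  show (subst (iterG G k))^[j] {(0, 0)} = (subst G)^[k * j] {(0, 0)}
  rw [subst_iterG hfin h0, Function.iterate_mul]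

lemma monotone_iterG (h0 : (0, 0) ∈ G) : Monotone (iterG G) :=
  (subst_mono G).monotone_iterate_of_le_map <| by
    rintro _ rfl
    exact ⟨by simp, by simpa using h0⟩

end Substitution

/-- the fractal generated by `G` equals the one generated by any
of its iterates: `G^∞ = (G^k)^∞` for all `k > 0`. -/
theorem limit_iterate (G : Set NPos)
    (hfin : G.Finite) (h0 : (0, 0) ∈ G) (k : ℕ) (hk : 0 < k) :
    limitG G = limitG (iterG G k) :=
  calc limitG G = ⋃ j, iterG G (k * j) :=
        ((monotone_iterG h0).iUnion_comp_tendsto_atTop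
          (strictMono_mul_left_of_pos hk).tendsto_atTop).symm
    _ = limitG (iterG G k) := by simp only [limitG, iterG_iterG hfin h0]

end SelfAssembly
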